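/- Define P₃(μ, B) = (1/3)·(1 + e^{−7μ}·((3/8)e^{−B}e^{−4μ} − ((1/2) − (1/4)e^{−B})e^{−2μ} + ((1/2) + (11/8)e^{−B}))). Then for all real μ > 0 and B > 0 one has P₃(μ, B) > 1/3 and (1 − P₃(μ, B))/2 < 1/3. (P₃(μ, B) is the probability, under the standard LGT model with rate λ, that a random transfer sequence on a pectinate four-taxon species tree of type (a*;b;c) or (b*;a;c) induces the matching triplet topology ab|c, where μ = (1/3)λt₂ and B = 3λ(t₃ − t₂); each of the two mismatch topologies has probability (1 − P₃)/2.) -/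
import Mathlib


/-- The probability that a random transfer sequence on a pectinate four-taxon
species tree of type `(a*;b;c)` or `(b*;a;c)` induces the matching triplet
topology `ab|c`. -/
noncomputable def P₃ (μ B : ℝ) : ℝ :=
  (1/3) * (1 + Real.exp (-7 * μ) * ((3/8) * Real.exp (-B) * Real.exp (-4 * μ)
      - ((1/2) - (1/4) * Real.exp (-B)) * Real.exp (-2 * μ)
      + ((1/2) + (11/8) * Real.exp (-B))))

theorem match_prob_gt_third_a_star_bc (μ B : ℝ) (hμ : 0 < μ) (hB : 0 < B) :
    P₃ μ B > 1/3 ∧ (1 - P₃ μ B) / 2 < 1/3 := by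
  have h7 : (0:ℝ) < Real.exp (-7 * μ) := Real.exp_pos _
  have h4 : (0:ℝ) < Real.exp (-4 * μ) := Real.exp_pos _
  have hy : (0:ℝ) < Real.exp (-B) := Real.exp_pos _
  have hx1 : Real.exp (-2 * μ) < 1 := by
    rw [Real.exp_lt_one_iff]; linarith
  have hx0 : (0:ℝ) < Real.exp (-2 * μ) := Real.exp_pos _
  have hbr : (0:ℝ) < (3/8) * Real.exp (-B) * Real.exp (-4 * μ)
      - ((1/2) - (1/4) * Real.exp (-B)) * Real.exp (-2 * μ)
      + ((1/2) + (11/8) * Real.exp (-B)) := by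
    nlinarith [mul_pos hy h4, mul_pos hy hx0]
  have h : P₃ μ B > 1/3 := by
    unfold P₃
    nlinarith [mul_pos h7 hbr]
  exact ⟨h, by linarith⟩
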